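/- arXiv:2601.19050 — 10 statements merged into one kernel-verified Lean document; each statement's English description precedes it below -/
import Mathlib

section
/- Let q1 be the integral quaternary quadratic form q1(w,x,y,z) = 2w² + 3x² + 3y² + 4z² + 2xy. Then for every integer n > 1 there exist integers w, x, y, z such that q1(w,x,y,z) = n. -/
/-!
Since `3x² + 3y² + 2xy = (x - y)² + 2(x + y)²` and `2a² + 2b² = (a + b)² + (a - b)²`, the form `q1`
represents every `v² + s² + t² + d²` with `d` even and `s + t ≡ 2v (mod 4)`. For even `n` and for
`n ≡ 3 (mod 4)` such a representation is a rearranged sum of four squares; for `n ≡ 1 (mod 4)` it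
comes from writing whichever of `n`, `n - 4` is `≡ 5 (mod 8)` as a sum of three squares.

Three squares, for `N ≡ 1 (mod 4)`: Dirichlet gives a prime `p ≡ 1 (mod 4)` with `p ≡ -1 (mod N)`,
so `-N` is a square mod `p` by reciprocity, and this yields a positive definite integral ternary
form of determinant one representing `N`. By Hermite's bound its minimum is one, so it splits as a
square plus a binary form of determinant one, which is a sum of two squares by the same argument.
-/

lemma Int.exists_four_mul_sq_add_mul_le (t m : ℤ) (hm : 0 < m) :
    ∃ k, 4 * (t + m * k) ^ 2 ≤ m ^ 2 := by
  refine ⟨-((2 * t + m) / (2 * m)), ?_⟩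
  have h1 := Int.mul_ediv_add_emod (2 * t + m) (2 * m)
  have h2 := Int.emod_nonneg (2 * t + m) (by positivity : 2 * m ≠ 0)
  have h3 := Int.emod_lt_of_pos (2 * t + m) (by positivity : 0 < 2 * m)
  nlinarith

lemma Int.three_mul_sq_le_of_forall_le {m t r : ℤ} (hm : 0 < m)
    (h : ∀ k, m * m ≤ (m * k + t) ^ 2 + r) : 3 * m ^ 2 ≤ 4 * r := by
  obtain ⟨k, hk⟩ := Int.exists_four_mul_sq_add_mul_le t m hm
  nlinarith [h k]

lemma Int.sq_emod_eight (x : ℤ) :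
    (x % 2 = 1 ∧ x ^ 2 % 8 = 1) ∨ (x % 4 = 0 ∧ x ^ 2 % 8 = 0) ∨ (x % 4 = 2 ∧ x ^ 2 % 8 = 4) := by
  have h : x ^ 2 % 8 = (x % 8) ^ 2 % 8 := by rw [sq, sq, Int.mul_emod]
  have h0 := Int.emod_nonneg x (by norm_num : (8 : ℤ) ≠ 0)
  have h8 := Int.emod_lt_of_pos x (by norm_num : (0 : ℤ) < 8)
  interval_cases hx : x % 8 <;> omega

lemma Int.sq_emod_four (x : ℤ) : x ^ 2 % 4 = x % 2 := by
  rcases Int.sq_emod_eight x with h | h | h <;> omega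

namespace Matrix

variable {n : Type*}

lemma IsHermitian.apply_int {B : Matrix n n ℤ} (hB : B.IsHermitian) (i j : n) :
    B j i = B i j := by
  simpa using hB.apply i j

variable [Fintype n] {A U : Matrix n n ℤ}

lemma PosDef.dotProduct_mulVec_pos_int (hA : A.PosDef) {x : n → ℤ} (hx : x ≠ 0) :
    0 < x ⬝ᵥ A *ᵥ x := by
  simpa using hA.dotProduct_mulVec_pos hx

lemma PosDef.isUnit_of_forall_dvd (hA : A.PosDef) {v : n → ℤ} (hv : v ≠ 0)
    (hmin : ∀ w ≠ 0, v ⬝ᵥ A *ᵥ v ≤ w ⬝ᵥ A *ᵥ w) {g : ℤ} (hg : ∀ i, g ∣ v i) : IsUnit g := by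
  choose w hw using hg
  have hvw : v = g • w := funext hw
  have hg0 : g ≠ 0 := by rintro rfl; simp [hvw] at hv
  have hw0 : w ≠ 0 := by rintro rfl; simp [hvw] at hv
  have hval : v ⬝ᵥ A *ᵥ v = g ^ 2 * (w ⬝ᵥ A *ᵥ w) := by
    rw [hvw, mulVec_smul, dotProduct_smul, smul_dotProduct, smul_eq_mul, smul_eq_mul]; ring
  have hg2 : g ^ 2 ≤ 1 := by nlinarith [hmin w hw0, hA.dotProduct_mulVec_pos_int hw0]
  rw [Int.isUnit_iff]
  have : -1 ≤ g ∧ g ≤ 1 := by constructor <;> nlinarith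
  omega

lemma dotProduct_transpose_mul_mul_mulVec (A U : Matrix n n ℤ) (w : n → ℤ) :
    w ⬝ᵥ (Uᵀ * A * U) *ᵥ w = (U *ᵥ w) ⬝ᵥ A *ᵥ (U *ᵥ w) := by
  rw [← mulVec_mulVec, ← mulVec_mulVec, dotProduct_mulVec, vecMul_transpose]

variable [DecidableEq n]

lemma PosDef.exists_forall_le [Nonempty n] (hA : A.PosDef) :
    ∃ v ≠ 0, ∀ w ≠ 0, v ⬝ᵥ A *ᵥ v ≤ w ⬝ᵥ A *ᵥ w := by
  obtain ⟨m, ⟨v, hv, rfl⟩, hmin⟩ := Int.exists_least_of_bdd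
    (P := fun m ↦ ∃ v ≠ 0, v ⬝ᵥ A *ᵥ v = m)
    ⟨0, by rintro _ ⟨v, hv, rfl⟩; exact (hA.dotProduct_mulVec_pos_int hv).le⟩
    ⟨_, Pi.single (Classical.arbitrary n) 1, by simp, rfl⟩
  exact ⟨v, hv, fun w hw ↦ hmin _ ⟨w, hw, rfl⟩⟩

lemma PosDef.transpose_mul_mul (hA : A.PosDef) (hU : U.det ≠ 0) : (Uᵀ * A * U).PosDef := by
  simpa [conjTranspose_eq_transpose_of_trivial] using
    hA.conjTranspose_mul_mul_same (mulVec_injective_of_det_ne_zero hU)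

lemma det_transpose_mul_mul (hU : U.det = 1) : (Uᵀ * A * U).det = A.det := by
  simp [det_mul, hU]

lemma mulVec_adjugate_mulVec (hU : U.det = 1) (x : n → ℤ) : U *ᵥ (U.adjugate *ᵥ x) = x := by
  simp [mulVec_mulVec, mul_adjugate, hU]

lemma transpose_mul_mul_apply_self (A U : Matrix n n ℤ) (i : n) :
    (Uᵀ * A * U) i i = (U *ᵥ Pi.single i 1) ⬝ᵥ A *ᵥ (U *ᵥ Pi.single i 1) := by
  rw [← dotProduct_transpose_mul_mul_mulVec]; simp

lemma PosDef.exists_det_eq_one_forall_le [Nonempty n] (hA : A.PosDef) (i : n)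
    (hext : ∀ v : n → ℤ, (∀ g : ℤ, (∀ j, g ∣ v j) → IsUnit g) →
      ∃ U : Matrix n n ℤ, U.det = 1 ∧ U *ᵥ Pi.single i 1 = v) :
    ∃ U : Matrix n n ℤ, U.det = 1 ∧ ∀ w ≠ 0, (Uᵀ * A * U) i i ≤ w ⬝ᵥ (Uᵀ * A * U) *ᵥ w := by
  obtain ⟨v, hv, hmin⟩ := hA.exists_forall_le
  obtain ⟨U, hU, hUv⟩ := hext v fun g hg ↦ hA.isUnit_of_forall_dvd hv hmin hg
  refine ⟨U, hU, fun w hw ↦ ?_⟩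
  rw [transpose_mul_mul_apply_self, hUv, dotProduct_transpose_mul_mul_mulVec]
  have hinj := mulVec_injective_of_det_ne_zero (M := U) (by simp [hU])
  exact hmin _ fun h ↦ hw (hinj (by simpa using h))

section Binary

variable {B : Matrix (Fin 2) (Fin 2) ℤ}

lemma exists_det_eq_one_mulVec_single_fin_two (v : Fin 2 → ℤ)
    (hv : ∀ g : ℤ, (∀ j, g ∣ v j) → IsUnit g) :
    ∃ U : Matrix (Fin 2) (Fin 2) ℤ, U.det = 1 ∧ U *ᵥ Pi.single 0 1 = v := by
  have hcop : IsCoprime (v 0) (v 1) := (gcd_isUnit_iff _ _).mp <| hv _ fun j ↦ by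
    fin_cases j; exacts [gcd_dvd_left _ _, gcd_dvd_right _ _]
  obtain ⟨U, h0, h1⟩ := hcop.exists_SL2_col 0
  refine ⟨U, U.2, funext fun j ↦ ?_⟩
  fin_cases j <;> simp [h0, h1]

lemma IsHermitian.mul_dotProduct_mulVec_fin_two (hB : B.IsHermitian) (w : Fin 2 → ℤ) :
    B 0 0 * (w ⬝ᵥ B *ᵥ w) = (B 0 0 * w 0 + B 0 1 * w 1) ^ 2 + B.det * w 1 ^ 2 := by
  simp only [dotProduct, mulVec, Fin.sum_univ_two, det_fin_two, hB.apply_int 0 1]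
  ring

lemma posDef_of_fin_two (hB : B.IsHermitian) (h0 : 0 < B 0 0) (hdet : 0 < B.det) :
    B.PosDef := by
  refine PosDef.of_dotProduct_mulVec_pos hB fun w hw ↦ ?_
  simp only [star_trivial]
  refine pos_of_mul_pos_right (hB.mul_dotProduct_mulVec_fin_two w ▸ ?_) h0.le
  by_cases h1 : w 1 = 0
  · have h0' : w 0 ≠ 0 := fun h ↦ hw (funext fun j ↦ by fin_cases j <;> simp [h, h1])
    have : 0 < (B 0 0 * w 0) ^ 2 := by positivity
    simpa [h1] using this
  · positivity

lemma PosDef.three_mul_sq_le_four_mul_det_of_forall_le (hB : B.PosDef)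
    (hmin : ∀ w ≠ 0, B 0 0 ≤ w ⬝ᵥ B *ᵥ w) : 3 * B 0 0 ^ 2 ≤ 4 * B.det := by
  refine Int.three_mul_sq_le_of_forall_le (t := B 0 1) hB.diag_pos fun k ↦ ?_
  have key := hB.1.mul_dotProduct_mulVec_fin_two ![k, 1]
  have hk := hmin ![k, 1] (by simp)
  simp only [cons_val_zero, cons_val_one, one_pow, mul_one] at key
  nlinarith [hB.diag_pos (i := 0)]

lemma PosDef.exists_three_mul_sq_le_four_mul_det (hB : B.PosDef) :
    ∃ v ≠ 0, 3 * (v ⬝ᵥ B *ᵥ v) ^ 2 ≤ 4 * B.det := by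
  obtain ⟨U, hU, hmin⟩ := hB.exists_det_eq_one_forall_le 0 exists_det_eq_one_mulVec_single_fin_two
  have hC := hB.transpose_mul_mul (U := U) (by simp [hU])
  have h3 := hC.three_mul_sq_le_four_mul_det_of_forall_le hmin
  have h0 := hC.dotProduct_mulVec_pos_int (x := Pi.single 0 1) (by simp)
  rw [transpose_mul_mul_apply_self, det_transpose_mul_mul hU] at h3
  rw [dotProduct_transpose_mul_mul_mulVec] at h0
  exact ⟨_, fun h ↦ by simp [h] at h0, h3⟩

lemma PosDef.exists_sq_add_sq_of_det_eq_one (hB : B.PosDef) (hdet : B.det = 1)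
    (x : Fin 2 → ℤ) : ∃ a b : ℤ, x ⬝ᵥ B *ᵥ x = a ^ 2 + b ^ 2 := by
  obtain ⟨U, hU, hmin⟩ := hB.exists_det_eq_one_forall_le 0 exists_det_eq_one_mulVec_single_fin_two
  set C := Uᵀ * B * U
  have hC : C.PosDef := hB.transpose_mul_mul (by simp [hU])
  have hCdet : C.det = 1 := by rw [det_transpose_mul_mul hU, hdet]
  have h3 := hC.three_mul_sq_le_four_mul_det_of_forall_le hmin
  have hC00 : C 0 0 = 1 := by rw [hCdet] at h3; nlinarith [hC.diag_pos (i := 0)]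
  set y := U.adjugate *ᵥ x
  refine ⟨y 0 + C 0 1 * y 1, y 1, ?_⟩
  have key := hC.1.mul_dotProduct_mulVec_fin_two y
  rw [hC00, hCdet, dotProduct_transpose_mul_mul_mulVec, mulVec_adjugate_mulVec hU] at key
  linarith

end Binary

section Ternary

lemma det_fin_three_of {R : Type*} [CommRing R] (a b c d e f g h i : R) :
    (!![a, b, c; d, e, f; g, h, i]).det =
      a * e * i - a * f * h - b * d * i + b * f * g + c * d * h - c * e * g := by
  rw [det_fin_three]; rfl

lemma exists_det_eq_one_mulVec_single_fin_three (v : Fin 3 → ℤ)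
    (hv : ∀ g : ℤ, (∀ j, g ∣ v j) → IsUnit g) :
    ∃ U : Matrix (Fin 3) (Fin 3) ℤ, U.det = 1 ∧ U *ᵥ Pi.single 0 1 = v := by
  obtain ⟨x, y, hx, hy, hxy⟩ := extract_gcd (v 0) (v 1)
  set g := gcd (v 0) (v 1)
  obtain ⟨a, b, hab⟩ := (gcd_isUnit_iff x y).mp hxy
  have hgz : IsCoprime g (v 2) := by
    refine (gcd_isUnit_iff _ _).mp (hv _ fun j ↦ ?_)
    fin_cases j
    · exact (gcd_dvd_left _ _).trans (gcd_dvd_left _ _)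
    · exact (gcd_dvd_left _ _).trans (gcd_dvd_right _ _)
    · exact gcd_dvd_right _ _
  obtain ⟨c, d, hcd⟩ := hgz
  refine ⟨!![v 0, -b, -d * x; v 1, a, -d * y; v 2, 0, c], ?_, funext fun j ↦ ?_⟩
  · rw [det_fin_three_of, hx, hy]
    linear_combination (a * x + b * y) * hcd + hab
  · fin_cases j <;> simp

/-- `B 0 0` times the Schur complement of the entry `B 0 0`, which keeps it integral. -/
def scaledSchurComplement (B : Matrix (Fin 3) (Fin 3) ℤ) : Matrix (Fin 2) (Fin 2) ℤ :=
  !![B 0 0 * B 1 1 - B 0 1 ^ 2, B 0 0 * B 1 2 - B 0 1 * B 0 2;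
    B 0 0 * B 1 2 - B 0 1 * B 0 2, B 0 0 * B 2 2 - B 0 2 ^ 2]

variable {B : Matrix (Fin 3) (Fin 3) ℤ}

lemma isHermitian_scaledSchurComplement (B : Matrix (Fin 3) (Fin 3) ℤ) :
    B.scaledSchurComplement.IsHermitian := by
  ext i j; fin_cases i <;> fin_cases j <;> simp [scaledSchurComplement]

lemma IsHermitian.mul_dotProduct_mulVec_fin_three (hB : B.IsHermitian) (w : Fin 3 → ℤ) :
    B 0 0 * (w ⬝ᵥ B *ᵥ w) = (B 0 0 * w 0 + B 0 1 * w 1 + B 0 2 * w 2) ^ 2 +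
      ![w 1, w 2] ⬝ᵥ B.scaledSchurComplement *ᵥ ![w 1, w 2] := by
  simp only [dotProduct, mulVec, Fin.sum_univ_two, Fin.sum_univ_three, scaledSchurComplement,
    of_apply, cons_val', cons_val_zero, cons_val_one, empty_val', cons_val_fin_one,
    hB.apply_int 0 1, hB.apply_int 0 2, hB.apply_int 1 2]
  ring

lemma IsHermitian.det_scaledSchurComplement (hB : B.IsHermitian) :
    B.scaledSchurComplement.det = B 0 0 * B.det := by
  simp only [det_fin_two, det_fin_three, scaledSchurComplement, of_apply, cons_val',
    cons_val_zero, cons_val_one, empty_val', cons_val_fin_one,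
    hB.apply_int 0 1, hB.apply_int 0 2, hB.apply_int 1 2]
  ring

lemma posDef_of_posDef_scaledSchurComplement (hB : B.IsHermitian) (h0 : 0 < B 0 0)
    (hS : B.scaledSchurComplement.PosDef) : B.PosDef := by
  refine PosDef.of_dotProduct_mulVec_pos hB fun w hw ↦ ?_
  simp only [star_trivial]
  refine pos_of_mul_pos_right (hB.mul_dotProduct_mulVec_fin_three w ▸ ?_) h0.le
  by_cases h12 : ![w 1, w 2] = 0
  · have h1 : w 1 = 0 := by simpa using congrFun h12 0
    have h2 : w 2 = 0 := by simpa using congrFun h12 1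
    have h0' : w 0 ≠ 0 := fun h ↦ hw (funext fun j ↦ by fin_cases j <;> simp [h, h1, h2])
    have : 0 < (B 0 0 * w 0) ^ 2 := by positivity
    simpa [h12, h1, h2] using this
  · have := hS.dotProduct_mulVec_pos_int h12
    positivity

lemma PosDef.three_mul_sq_le_scaledSchurComplement (hB : B.PosDef)
    (hmin : ∀ w ≠ 0, B 0 0 ≤ w ⬝ᵥ B *ᵥ w) {v : Fin 2 → ℤ} (hv : v ≠ 0) :
    3 * B 0 0 ^ 2 ≤ 4 * (v ⬝ᵥ B.scaledSchurComplement *ᵥ v) := by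
  refine Int.three_mul_sq_le_of_forall_le (t := B 0 1 * v 0 + B 0 2 * v 1) hB.diag_pos
    fun k ↦ ?_
  set w : Fin 3 → ℤ := ![k, v 0, v 1]
  have hw : w ≠ 0 := fun h ↦ hv (funext fun j ↦ by
    fin_cases j
    · exact congrFun h 1
    · exact congrFun h 2)
  have hw12 : ![w 1, w 2] = v := funext fun j ↦ by fin_cases j <;> rfl
  have key := hB.1.mul_dotProduct_mulVec_fin_three w
  rw [hw12, show w 0 = k from rfl, show w 1 = v 0 from rfl, show w 2 = v 1 from rfl] at key
  nlinarith [hmin w hw, hB.diag_pos (i := 0)]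

lemma PosDef.posDef_scaledSchurComplement (hB : B.PosDef)
    (hmin : ∀ w ≠ 0, B 0 0 ≤ w ⬝ᵥ B *ᵥ w) : B.scaledSchurComplement.PosDef := by
  refine PosDef.of_dotProduct_mulVec_pos (isHermitian_scaledSchurComplement B) fun v hv ↦ ?_
  have := hB.three_mul_sq_le_scaledSchurComplement hmin hv
  have := hB.diag_pos (i := 0)
  simp only [star_trivial]
  nlinarith

lemma PosDef.apply_zero_zero_eq_one (hB : B.PosDef) (hdet : B.det = 1)
    (hmin : ∀ w ≠ 0, B 0 0 ≤ w ⬝ᵥ B *ᵥ w) : B 0 0 = 1 := by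
  obtain ⟨v, hv, hsmall⟩ :=
    (hB.posDef_scaledSchurComplement hmin).exists_three_mul_sq_le_four_mul_det
  have hlarge := hB.three_mul_sq_le_scaledSchurComplement hmin hv
  rw [hB.1.det_scaledSchurComplement, hdet, mul_one] at hsmall
  have h0 := hB.diag_pos (i := 0)
  -- Hermite: `3 m² ≤ 4 s` and `3 s² ≤ 4 m` force `m = 1`
  set m := B 0 0
  set s := v ⬝ᵥ B.scaledSchurComplement *ᵥ v
  have h4 : 9 * m ^ 4 ≤ 16 * s ^ 2 := by nlinarith [pow_le_pow_left₀ (by positivity) hlarge 2]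
  have h3 : 27 * m ^ 3 ≤ 64 := by nlinarith
  nlinarith

lemma PosDef.exists_sq_add_sq_add_sq_of_det_eq_one {A : Matrix (Fin 3) (Fin 3) ℤ}
    (hA : A.PosDef) (hdet : A.det = 1) (x : Fin 3 → ℤ) :
    ∃ a b c : ℤ, x ⬝ᵥ A *ᵥ x = a ^ 2 + b ^ 2 + c ^ 2 := by
  obtain ⟨U, hU, hmin⟩ :=
    hA.exists_det_eq_one_forall_le 0 exists_det_eq_one_mulVec_single_fin_three
  set B := Uᵀ * A * U
  have hB : B.PosDef := hA.transpose_mul_mul (by simp [hU])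
  have hBdet : B.det = 1 := by rw [det_transpose_mul_mul hU, hdet]
  have hB00 := hB.apply_zero_zero_eq_one hBdet hmin
  set y := U.adjugate *ᵥ x
  obtain ⟨a, b, hab⟩ := (hB.posDef_scaledSchurComplement hmin).exists_sq_add_sq_of_det_eq_one
    (by rw [hB.1.det_scaledSchurComplement, hB00, hBdet, one_mul]) ![y 1, y 2]
  refine ⟨y 0 + B 0 1 * y 1 + B 0 2 * y 2, a, b, ?_⟩
  have key := hB.1.mul_dotProduct_mulVec_fin_three y
  rw [hB00, one_mul, hab, dotProduct_transpose_mul_mul_mulVec, mulVec_adjugate_mulVec hU] at key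
  linarith

end Ternary

end Matrix

open Matrix in
lemma Int.exists_sq_add_sq_add_sq_of_dvd {N p h : ℤ} (hN : 0 < N) (hp : 0 < p)
    (hNp : N ∣ p + 1) (hph : p ∣ h ^ 2 + N) : ∃ a b c : ℤ, N = a ^ 2 + b ^ 2 + c ^ 2 := by
  obtain ⟨q, hq⟩ := hNp
  obtain ⟨k, hk⟩ := hph
  set A : Matrix (Fin 3) (Fin 3) ℤ := !![N, 1, 0; 1, q ^ 2 * k - q, -(h * q); 0, -(h * q), p]
  have hA : A.IsHermitian := by
    ext i j; fin_cases i <;> fin_cases j <;> simp [A]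
  -- the entries are chosen so that `det A = N q - p = 1`
  have hdet : A.det = 1 := by
    rw [det_fin_three_of]
    linear_combination -N * q ^ 2 * hk - (N * q + 1) * hq
  have hS : A.scaledSchurComplement.PosDef := by
    refine posDef_of_fin_two (isHermitian_scaledSchurComplement A) ?_ ?_
    · have : p * (N * (q ^ 2 * k - q) - 1) = N * (h * q) ^ 2 + 1 := by
        linear_combination -N * q ^ 2 * hk - (N * q + 1) * hq
      show 0 < N * (q ^ 2 * k - q) - 1 ^ 2
      nlinarith [sq_nonneg (h * q)]
    · rw [hA.det_scaledSchurComplement, hdet]; simpa [A] using hN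
  have hApos := posDef_of_posDef_scaledSchurComplement hA (by simpa [A] using hN) hS
  obtain ⟨a, b, c, habc⟩ := hApos.exists_sq_add_sq_add_sq_of_det_eq_one hdet (Pi.single 0 1)
  exact ⟨a, b, c, by simpa [A] using habc⟩

lemma Nat.exists_prime_mod_four_eq_one_dvd_add_one {N : ℕ} (hN : Odd N) :
    ∃ p : ℕ, p.Prime ∧ p % 4 = 1 ∧ (N : ℤ) ∣ p + 1 := by
  have hcop : IsCoprime (2 * N - 1 : ℤ) (4 * N : ℕ) := ⟨2 * N - 1, 1 - N, by push_cast; ring⟩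
  obtain ⟨p, -, hp, hmod⟩ :=
    Nat.forall_exists_prime_gt_and_zmodEq N (by have := hN.pos; omega) hcop
  obtain ⟨t, ht⟩ := hmod.dvd
  push_cast at ht
  refine ⟨p, hp, ?_, ⟨2 - 4 * t, by linarith⟩⟩
  obtain ⟨r, rfl⟩ := hN
  obtain ⟨s, hs⟩ : ∃ s, (p : ℤ) = 4 * r + 1 - 4 * s :=
    ⟨(2 * r + 1) * t, by push_cast at ht; linarith⟩
  omega

open NumberTheorySymbols in
lemma Nat.exists_dvd_sq_add {N p : ℕ} [Fact p.Prime] (hN : N % 4 = 1) (hp : p % 4 = 1)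
    (hNp : (N : ℤ) ∣ p + 1) : ∃ h : ℤ, (p : ℤ) ∣ h ^ 2 + N := by
  have hpodd : Odd p := Nat.odd_iff.mpr (by omega)
  have hJ : J(-N | p) = 1 := by
    rw [neg_eq_neg_one_mul, jacobiSym.mul_left, jacobiSym.at_neg_one hpodd,
      ZMod.χ₄_nat_one_mod_four hp, one_mul,
      jacobiSym.quadratic_reciprocity_one_mod_four hN hpodd,
      jacobiSym.mod_left' (Int.modEq_iff_dvd.mpr (by simpa using hNp) : (-1 : ℤ) ≡ p [ZMOD N]).symm,
      jacobiSym.at_neg_one (Nat.odd_iff.mpr (by omega)), ZMod.χ₄_nat_one_mod_four hN]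
  obtain ⟨r, hr⟩ := ZMod.isSquare_of_jacobiSym_eq_one hJ
  refine ⟨r.val, (ZMod.intCast_zmod_eq_zero_iff_dvd _ _).mp ?_⟩
  push_cast at hr ⊢
  rw [ZMod.natCast_zmod_val, sq, ← hr, neg_add_cancel]

lemma Nat.exists_sq_add_sq_add_sq_of_mod_four_eq_one {N : ℕ} (hN : N % 4 = 1) :
    ∃ a b c : ℤ, (N : ℤ) = a ^ 2 + b ^ 2 + c ^ 2 := by
  obtain ⟨p, hp, hp4, hdvd⟩ :=
    Nat.exists_prime_mod_four_eq_one_dvd_add_one (Nat.odd_iff.mpr (by omega : N % 2 = 1))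
  have := Fact.mk hp
  obtain ⟨h, hh⟩ := Nat.exists_dvd_sq_add hN hp4 hdvd
  exact Int.exists_sq_add_sq_add_sq_of_dvd (by omega) (by exact_mod_cast hp.pos) hdvd hh

lemma Int.exists_sum_four_squares_even (m : ℕ) :
    ∃ a b c d : ℤ, a % 2 = 0 ∧ a ^ 2 + b ^ 2 + c ^ 2 + d ^ 2 = m := by
  by_cases hm : m % 4 = 0
  · obtain ⟨a, b, c, d, h⟩ := Nat.sum_four_squares (m / 4)
    refine ⟨2 * a, 2 * b, 2 * c, 2 * d, by omega, ?_⟩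
    have h' : (a ^ 2 + b ^ 2 + c ^ 2 + d ^ 2 : ℤ) = (m / 4 : ℕ) := by exact_mod_cast h
    push_cast at h'
    have hm' : (m : ℤ) = 4 * ((m : ℤ) / 4) := by omega
    linear_combination 4 * h' - hm'
  · obtain ⟨a, b, c, d, h⟩ := Nat.sum_four_squares m
    have h' : (a ^ 2 + b ^ 2 + c ^ 2 + d ^ 2 : ℤ) = m := by exact_mod_cast h
    have := Int.sq_emod_four a; have := Int.sq_emod_four b
    have := Int.sq_emod_four c; have := Int.sq_emod_four d
    rcases (by omega : (a : ℤ) % 2 = 0 ∨ (b : ℤ) % 2 = 0 ∨ (c : ℤ) % 2 = 0 ∨ (d : ℤ) % 2 = 0)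
      with h | h | h | h
    · exact ⟨a, b, c, d, h, h'⟩
    · exact ⟨b, a, c, d, h, by linear_combination h'⟩
    · exact ⟨c, a, b, d, h, by linear_combination h'⟩
    · exact ⟨d, a, b, c, h, by linear_combination h'⟩

lemma Int.modEq_of_sq_add_sq_add_sq_emod_eight {v s t : ℤ} (hv : v % 2 = 1)
    (h : (v ^ 2 + s ^ 2 + t ^ 2) % 8 = 5) : s + t ≡ 2 * v [ZMOD 4] := by
  unfold Int.ModEq
  rcases Int.sq_emod_eight v with hv' | hv' | hv' <;>
  rcases Int.sq_emod_eight s with hs | hs | hs <;>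
  rcases Int.sq_emod_eight t with ht | ht | ht <;> omega

def q1 (w x y z : ℤ) : ℤ := 2 * w ^ 2 + 3 * x ^ 2 + 3 * y ^ 2 + 4 * z ^ 2 + 2 * x * y

lemma exists_q1_eq_of_modEq {v s t d : ℤ} (hd : d % 2 = 0) (h : s + t ≡ 2 * v [ZMOD 4]) :
    ∃ w x y z, q1 w x y z = v ^ 2 + s ^ 2 + t ^ 2 + d ^ 2 := by
  unfold Int.ModEq at h
  obtain ⟨a, b, hs, ht⟩ : ∃ a b, s = 2 * a - v + b ∧ t = 2 * a - v - b :=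
    ⟨(s + t + 2 * v) / 4, (s - t) / 2, by omega, by omega⟩
  obtain ⟨z, rfl⟩ : ∃ z, d = 2 * z := ⟨d / 2, by omega⟩
  refine ⟨b, a, a - v, z, ?_⟩
  rw [hs, ht, q1]
  ring

lemma exists_q1_eq_two_mul (m : ℕ) : ∃ w x y z, q1 w x y z = 2 * m := by
  obtain ⟨a, b, c, d, ha, habcd⟩ := Int.exists_sum_four_squares_even m
  have key : ∀ b c d : ℤ, c % 2 = d % 2 →
      ∃ w x y z, q1 w x y z = 2 * (a ^ 2 + b ^ 2 + c ^ 2 + d ^ 2) := by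
    intro b c d hcd
    obtain ⟨w, x, y, z, h⟩ := exists_q1_eq_of_modEq (v := c + d) (s := a + b) (t := a - b)
      (d := c - d) (by omega) (by unfold Int.ModEq; omega)
    exact ⟨w, x, y, z, by rw [h]; ring⟩
  rw [← habcd]
  rcases (by omega : c % 2 = d % 2 ∨ b % 2 = d % 2 ∨ b % 2 = c % 2) with h | h | h
  · exact key b c d h
  · obtain ⟨w, x, y, z, h⟩ := key c b d h; exact ⟨w, x, y, z, by rw [h]; ring⟩
  · obtain ⟨w, x, y, z, h⟩ := key d b c h; exact ⟨w, x, y, z, by rw [h]; ring⟩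

lemma exists_q1_eq_of_mod_four_eq_three {n : ℕ} (hn : n % 4 = 3) :
    ∃ w x y z, q1 w x y z = n := by
  obtain ⟨a, b, c, d, ha, habcd⟩ := Int.exists_sum_four_squares_even n
  have := Int.sq_emod_four a; have := Int.sq_emod_four b
  have := Int.sq_emod_four c; have := Int.sq_emod_four d
  obtain ⟨t, ht, hmod⟩ : ∃ t, t ^ 2 = c ^ 2 ∧ b + t ≡ 2 * d [ZMOD 4] := by
    by_cases h : (b + c) % 4 = 2
    · exact ⟨c, rfl, by unfold Int.ModEq; omega⟩
    · exact ⟨-c, by ring, by unfold Int.ModEq; omega⟩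
  obtain ⟨w, x, y, z, h⟩ := exists_q1_eq_of_modEq ha hmod
  exact ⟨w, x, y, z, by rw [h, ← habcd, ht]; ring⟩

lemma exists_q1_eq_add_four_mul_sq {N : ℕ} (hN : N % 8 = 5) (z : ℤ) :
    ∃ w x y z', q1 w x y z' = N + 4 * z ^ 2 := by
  obtain ⟨a, b, c, habc⟩ := Nat.exists_sq_add_sq_add_sq_of_mod_four_eq_one (N := N) (by omega)
  have key : ∀ v s t : ℤ, v % 2 = 1 → v ^ 2 + s ^ 2 + t ^ 2 = N →
      ∃ w x y z', q1 w x y z' = N + 4 * z ^ 2 := by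
    intro v s t hv hvst
    obtain ⟨w, x, y, z', h⟩ := exists_q1_eq_of_modEq (d := 2 * z) (by omega)
      (Int.modEq_of_sq_add_sq_add_sq_emod_eight hv (by rw [hvst]; omega))
    exact ⟨w, x, y, z', by rw [h, ← hvst]; ring⟩
  have := Int.sq_emod_four a; have := Int.sq_emod_four b; have := Int.sq_emod_four c
  rcases (by omega : a % 2 = 1 ∨ b % 2 = 1 ∨ c % 2 = 1) with h | h | h
  · exact key a b c h habc.symm
  · exact key b a c h (by rw [habc]; ring)
  · exact key c a b h (by rw [habc]; ring)

theorem q1_represents_all_integers_gt_one :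
    ∀ n : ℤ, 1 < n → ∃ w x y z : ℤ,
      2 * w ^ 2 + 3 * x ^ 2 + 3 * y ^ 2 + 4 * z ^ 2 + 2 * x * y = n := by
  intro n hn
  lift n to ℕ using by omega
  show ∃ w x y z, q1 w x y z = n
  rcases (by omega : n % 2 = 0 ∨ n % 4 = 3 ∨ n % 8 = 5 ∨ n % 8 = 1) with h | h | h | h
  · obtain ⟨m, rfl⟩ : ∃ m, n = 2 * m := ⟨n / 2, by omega⟩
    simpa using exists_q1_eq_two_mul m
  · exact exists_q1_eq_of_mod_four_eq_three h
  · simpa using exists_q1_eq_add_four_mul_sq h 0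
  · obtain ⟨N, rfl⟩ : ∃ N, n = N + 4 := ⟨n - 4, by omega⟩
    simpa using exists_q1_eq_add_four_mul_sq (N := N) (by omega) 1
end

section
/- Let q4 be the integral quaternary quadratic form q4(w,x,y,z) = 2w² + 3x² + 4y² + 6z² − 2wx + 2wz + 2xy + 4yz. Then for every integer n > 1 there exist integers w, x, y, z such that q4(w,x,y,z) = n. -/
private lemma q4lat (a b c d : ℤ) (h1 : (3:ℤ) ∣ (c - d)) (h2 : (3:ℤ) ∣ (a - b - d)) :
    ∃ w x y z : ℤ,
      2 * w ^ 2 + 3 * x ^ 2 + 4 * y ^ 2 + 6 * z ^ 2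
        - 2 * w * x + 2 * w * z + 2 * x * y + 4 * y * z = a^2 + b^2 + c^2 + d^2 := by
  obtain ⟨p, hp⟩ := h1
  obtain ⟨q, hq⟩ := h2
  have hc : c = 3*p + d := by linarith
  have ha : a = 3*q + b + d := by linarith
  subst hc ha
  exact ⟨-b - d - 2*q, -d - q - p, q, -p, by ring⟩

set_option maxHeartbeats 1000000 in
private lemma q4sort (a b c d : ℤ)
    (hk : ¬ (((¬ (3:ℤ) ∣ a) ∧ (3:ℤ) ∣ b ∧ (3:ℤ) ∣ c ∧ (3:ℤ) ∣ d) ∨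
        ((3:ℤ) ∣ a ∧ (¬ (3:ℤ) ∣ b) ∧ (3:ℤ) ∣ c ∧ (3:ℤ) ∣ d) ∨
        ((3:ℤ) ∣ a ∧ (3:ℤ) ∣ b ∧ (¬ (3:ℤ) ∣ c) ∧ (3:ℤ) ∣ d) ∨
        ((3:ℤ) ∣ a ∧ (3:ℤ) ∣ b ∧ (3:ℤ) ∣ c ∧ (¬ (3:ℤ) ∣ d)))) :
    ∃ w x y z : ℤ,
      2 * w ^ 2 + 3 * x ^ 2 + 4 * y ^ 2 + 6 * z ^ 2
        - 2 * w * x + 2 * w * z + 2 * x * y + 4 * y * z = a^2 + b^2 + c^2 + d^2 := by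
  have ha : a % 3 = 0 ∨ a % 3 = 1 ∨ a % 3 = 2 := by omega
  have hb : b % 3 = 0 ∨ b % 3 = 1 ∨ b % 3 = 2 := by omega
  have hc : c % 3 = 0 ∨ c % 3 = 1 ∨ c % 3 = 2 := by omega
  have hd : d % 3 = 0 ∨ d % 3 = 1 ∨ d % 3 = 2 := by omega
  rcases ha with h1|h1|h1 <;> rcases hb with h2|h2|h2 <;> rcases hc with h3|h3|h3 <;> rcases hd with h4|h4|h4
  · obtain ⟨w,x,y,z,h⟩ := q4lat a b c d (by omega) (by omega)
    exact ⟨w,x,y,z, by linear_combination h⟩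
  · omega
  · omega
  · omega
  · obtain ⟨w,x,y,z,h⟩ := q4lat c d (-a) b (by omega) (by omega)
    exact ⟨w,x,y,z, by linear_combination h⟩
  · obtain ⟨w,x,y,z,h⟩ := q4lat c (-d) (-a) (-b) (by omega) (by omega)
    exact ⟨w,x,y,z, by linear_combination h⟩
  · omega
  · obtain ⟨w,x,y,z,h⟩ := q4lat c (-d) (-a) (-b) (by omega) (by omega)
    exact ⟨w,x,y,z, by linear_combination h⟩
  · obtain ⟨w,x,y,z,h⟩ := q4lat c d (-a) b (by omega) (by omega)
    exact ⟨w,x,y,z, by linear_combination h⟩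
  · omega
  · obtain ⟨w,x,y,z,h⟩ := q4lat b d a c (by omega) (by omega)
    exact ⟨w,x,y,z, by linear_combination h⟩
  · obtain ⟨w,x,y,z,h⟩ := q4lat b (-d) a c (by omega) (by omega)
    exact ⟨w,x,y,z, by linear_combination h⟩
  · obtain ⟨w,x,y,z,h⟩ := q4lat b c a d (by omega) (by omega)
    exact ⟨w,x,y,z, by linear_combination h⟩
  · obtain ⟨w,x,y,z,h⟩ := q4lat a (-c) b d (by omega) (by omega)
    exact ⟨w,x,y,z, by linear_combination h⟩
  · obtain ⟨w,x,y,z,h⟩ := q4lat a (-b) c (-d) (by omega) (by omega)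
    exact ⟨w,x,y,z, by linear_combination h⟩
  · obtain ⟨w,x,y,z,h⟩ := q4lat b (-c) (-a) d (by omega) (by omega)
    exact ⟨w,x,y,z, by linear_combination h⟩
  · obtain ⟨w,x,y,z,h⟩ := q4lat a d (-b) c (by omega) (by omega)
    exact ⟨w,x,y,z, by linear_combination h⟩
  · obtain ⟨w,x,y,z,h⟩ := q4lat a b c d (by omega) (by omega)
    exact ⟨w,x,y,z, by linear_combination h⟩
  · omega
  · obtain ⟨w,x,y,z,h⟩ := q4lat b (-d) a c (by omega) (by omega)
    exact ⟨w,x,y,z, by linear_combination h⟩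
  · obtain ⟨w,x,y,z,h⟩ := q4lat b d a c (by omega) (by omega)
    exact ⟨w,x,y,z, by linear_combination h⟩
  · obtain ⟨w,x,y,z,h⟩ := q4lat b (-c) (-a) d (by omega) (by omega)
    exact ⟨w,x,y,z, by linear_combination h⟩
  · obtain ⟨w,x,y,z,h⟩ := q4lat a b c d (by omega) (by omega)
    exact ⟨w,x,y,z, by linear_combination h⟩
  · obtain ⟨w,x,y,z,h⟩ := q4lat a d (-b) c (by omega) (by omega)
    exact ⟨w,x,y,z, by linear_combination h⟩
  · obtain ⟨w,x,y,z,h⟩ := q4lat b c a d (by omega) (by omega)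
    exact ⟨w,x,y,z, by linear_combination h⟩
  · obtain ⟨w,x,y,z,h⟩ := q4lat a (-b) c (-d) (by omega) (by omega)
    exact ⟨w,x,y,z, by linear_combination h⟩
  · obtain ⟨w,x,y,z,h⟩ := q4lat a (-c) b d (by omega) (by omega)
    exact ⟨w,x,y,z, by linear_combination h⟩
  · omega
  · obtain ⟨w,x,y,z,h⟩ := q4lat a d (-b) c (by omega) (by omega)
    exact ⟨w,x,y,z, by linear_combination h⟩
  · obtain ⟨w,x,y,z,h⟩ := q4lat a (-d) b c (by omega) (by omega)
    exact ⟨w,x,y,z, by linear_combination h⟩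
  · obtain ⟨w,x,y,z,h⟩ := q4lat a c b d (by omega) (by omega)
    exact ⟨w,x,y,z, by linear_combination h⟩
  · obtain ⟨w,x,y,z,h⟩ := q4lat a b c d (by omega) (by omega)
    exact ⟨w,x,y,z, by linear_combination h⟩
  · obtain ⟨w,x,y,z,h⟩ := q4lat a (-b) c (-d) (by omega) (by omega)
    exact ⟨w,x,y,z, by linear_combination h⟩
  · obtain ⟨w,x,y,z,h⟩ := q4lat a (-c) b d (by omega) (by omega)
    exact ⟨w,x,y,z, by linear_combination h⟩
  · obtain ⟨w,x,y,z,h⟩ := q4lat b c a d (by omega) (by omega)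
    exact ⟨w,x,y,z, by linear_combination h⟩
  · obtain ⟨w,x,y,z,h⟩ := q4lat b (-c) (-a) d (by omega) (by omega)
    exact ⟨w,x,y,z, by linear_combination h⟩
  · obtain ⟨w,x,y,z,h⟩ := q4lat a b c d (by omega) (by omega)
    exact ⟨w,x,y,z, by linear_combination h⟩
  · obtain ⟨w,x,y,z,h⟩ := q4lat a (-c) b d (by omega) (by omega)
    exact ⟨w,x,y,z, by linear_combination h⟩
  · obtain ⟨w,x,y,z,h⟩ := q4lat c (-d) (-a) (-b) (by omega) (by omega)
    exact ⟨w,x,y,z, by linear_combination h⟩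
  · obtain ⟨w,x,y,z,h⟩ := q4lat a (-d) b c (by omega) (by omega)
    exact ⟨w,x,y,z, by linear_combination h⟩
  · obtain ⟨w,x,y,z,h⟩ := q4lat c (-d) (-a) (-b) (by omega) (by omega)
    exact ⟨w,x,y,z, by linear_combination h⟩
  · obtain ⟨w,x,y,z,h⟩ := q4lat b (-c) (-a) d (by omega) (by omega)
    exact ⟨w,x,y,z, by linear_combination h⟩
  · obtain ⟨w,x,y,z,h⟩ := q4lat c (-d) (-a) (-b) (by omega) (by omega)
    exact ⟨w,x,y,z, by linear_combination h⟩
  · obtain ⟨w,x,y,z,h⟩ := q4lat a (-b) c (-d) (by omega) (by omega)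
    exact ⟨w,x,y,z, by linear_combination h⟩
  · obtain ⟨w,x,y,z,h⟩ := q4lat a d (-b) c (by omega) (by omega)
    exact ⟨w,x,y,z, by linear_combination h⟩
  · obtain ⟨w,x,y,z,h⟩ := q4lat a (-b) c (-d) (by omega) (by omega)
    exact ⟨w,x,y,z, by linear_combination h⟩
  · obtain ⟨w,x,y,z,h⟩ := q4lat c d (-a) b (by omega) (by omega)
    exact ⟨w,x,y,z, by linear_combination h⟩
  · obtain ⟨w,x,y,z,h⟩ := q4lat b (-c) (-a) d (by omega) (by omega)
    exact ⟨w,x,y,z, by linear_combination h⟩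
  · obtain ⟨w,x,y,z,h⟩ := q4lat a d (-b) c (by omega) (by omega)
    exact ⟨w,x,y,z, by linear_combination h⟩
  · obtain ⟨w,x,y,z,h⟩ := q4lat b c a d (by omega) (by omega)
    exact ⟨w,x,y,z, by linear_combination h⟩
  · obtain ⟨w,x,y,z,h⟩ := q4lat a (-c) b d (by omega) (by omega)
    exact ⟨w,x,y,z, by linear_combination h⟩
  · obtain ⟨w,x,y,z,h⟩ := q4lat c d (-a) b (by omega) (by omega)
    exact ⟨w,x,y,z, by linear_combination h⟩
  · obtain ⟨w,x,y,z,h⟩ := q4lat a (-d) b c (by omega) (by omega)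
    exact ⟨w,x,y,z, by linear_combination h⟩
  · obtain ⟨w,x,y,z,h⟩ := q4lat a b c d (by omega) (by omega)
    exact ⟨w,x,y,z, by linear_combination h⟩
  · omega
  · obtain ⟨w,x,y,z,h⟩ := q4lat a (-d) b c (by omega) (by omega)
    exact ⟨w,x,y,z, by linear_combination h⟩
  · obtain ⟨w,x,y,z,h⟩ := q4lat a d (-b) c (by omega) (by omega)
    exact ⟨w,x,y,z, by linear_combination h⟩
  · obtain ⟨w,x,y,z,h⟩ := q4lat a (-c) b d (by omega) (by omega)
    exact ⟨w,x,y,z, by linear_combination h⟩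
  · obtain ⟨w,x,y,z,h⟩ := q4lat b (-c) (-a) d (by omega) (by omega)
    exact ⟨w,x,y,z, by linear_combination h⟩
  · obtain ⟨w,x,y,z,h⟩ := q4lat b c a d (by omega) (by omega)
    exact ⟨w,x,y,z, by linear_combination h⟩
  · obtain ⟨w,x,y,z,h⟩ := q4lat a c b d (by omega) (by omega)
    exact ⟨w,x,y,z, by linear_combination h⟩
  · obtain ⟨w,x,y,z,h⟩ := q4lat a (-b) c (-d) (by omega) (by omega)
    exact ⟨w,x,y,z, by linear_combination h⟩
  · obtain ⟨w,x,y,z,h⟩ := q4lat a b c d (by omega) (by omega)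
    exact ⟨w,x,y,z, by linear_combination h⟩
  · obtain ⟨w,x,y,z,h⟩ := q4lat a (-b) c (-d) (by omega) (by omega)
    exact ⟨w,x,y,z, by linear_combination h⟩
  · obtain ⟨w,x,y,z,h⟩ := q4lat b (-c) (-a) d (by omega) (by omega)
    exact ⟨w,x,y,z, by linear_combination h⟩
  · obtain ⟨w,x,y,z,h⟩ := q4lat c d (-a) b (by omega) (by omega)
    exact ⟨w,x,y,z, by linear_combination h⟩
  · obtain ⟨w,x,y,z,h⟩ := q4lat c d (-a) b (by omega) (by omega)
    exact ⟨w,x,y,z, by linear_combination h⟩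
  · obtain ⟨w,x,y,z,h⟩ := q4lat a b c d (by omega) (by omega)
    exact ⟨w,x,y,z, by linear_combination h⟩
  · obtain ⟨w,x,y,z,h⟩ := q4lat a (-d) b c (by omega) (by omega)
    exact ⟨w,x,y,z, by linear_combination h⟩
  · obtain ⟨w,x,y,z,h⟩ := q4lat a d (-b) c (by omega) (by omega)
    exact ⟨w,x,y,z, by linear_combination h⟩
  · obtain ⟨w,x,y,z,h⟩ := q4lat a (-c) b d (by omega) (by omega)
    exact ⟨w,x,y,z, by linear_combination h⟩
  · obtain ⟨w,x,y,z,h⟩ := q4lat b c a d (by omega) (by omega)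
    exact ⟨w,x,y,z, by linear_combination h⟩
  · obtain ⟨w,x,y,z,h⟩ := q4lat a b c d (by omega) (by omega)
    exact ⟨w,x,y,z, by linear_combination h⟩
  · obtain ⟨w,x,y,z,h⟩ := q4lat c (-d) (-a) (-b) (by omega) (by omega)
    exact ⟨w,x,y,z, by linear_combination h⟩
  · obtain ⟨w,x,y,z,h⟩ := q4lat a (-c) b d (by omega) (by omega)
    exact ⟨w,x,y,z, by linear_combination h⟩
  · obtain ⟨w,x,y,z,h⟩ := q4lat c (-d) (-a) (-b) (by omega) (by omega)
    exact ⟨w,x,y,z, by linear_combination h⟩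
  · obtain ⟨w,x,y,z,h⟩ := q4lat a d (-b) c (by omega) (by omega)
    exact ⟨w,x,y,z, by linear_combination h⟩
  · obtain ⟨w,x,y,z,h⟩ := q4lat a (-b) c (-d) (by omega) (by omega)
    exact ⟨w,x,y,z, by linear_combination h⟩
  · obtain ⟨w,x,y,z,h⟩ := q4lat a (-d) b c (by omega) (by omega)
    exact ⟨w,x,y,z, by linear_combination h⟩
  · obtain ⟨w,x,y,z,h⟩ := q4lat b (-c) (-a) d (by omega) (by omega)
    exact ⟨w,x,y,z, by linear_combination h⟩
  · obtain ⟨w,x,y,z,h⟩ := q4lat c (-d) (-a) (-b) (by omega) (by omega)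
    exact ⟨w,x,y,z, by linear_combination h⟩

private lemma q4rstep (a b c : ℤ) (h : ¬ ((3:ℤ) ∣ a ∧ (3:ℤ) ∣ b ∧ (3:ℤ) ∣ c)) :
    ∃ A B C : ℤ, A^2 + B^2 + C^2 = 9*(a^2 + b^2 + c^2) ∧
      ¬ (3:ℤ) ∣ A ∧ ¬ (3:ℤ) ∣ B ∧ ¬ (3:ℤ) ∣ C := by
  have hd : ¬ (3:ℤ) ∣ (a+b-c) ∨ ¬ (3:ℤ) ∣ (a+b+c) ∨ ¬ (3:ℤ) ∣ (a-b-c) ∨ ¬ (3:ℤ) ∣ (a-b+c) := by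
    omega
  rcases hd with h1|h1|h1|h1
  · exact ⟨2*a+2*b+c, 2*a-b-2*c, a-2*b+2*c, by ring, by omega, by omega, by omega⟩
  · exact ⟨2*a+2*b-c, 2*a-b+2*c, a-2*b-2*c, by ring, by omega, by omega, by omega⟩
  · exact ⟨2*a-2*b+c, 2*a+b-2*c, a+2*b+2*c, by ring, by omega, by omega, by omega⟩
  · exact ⟨2*a-2*b-c, 2*a+b+2*c, a+2*b-2*c, by ring, by omega, by omega, by omega⟩

private lemma q4R : ∀ m : ℕ, ∀ a b c : ℤ, a^2 + b^2 + c^2 = (m:ℤ) →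
    ¬ (a = 0 ∧ b = 0 ∧ c = 0) →
    ∃ A B C : ℤ, A^2 + B^2 + C^2 = 9*(m:ℤ) ∧
      ¬ (3:ℤ) ∣ A ∧ ¬ (3:ℤ) ∣ B ∧ ¬ (3:ℤ) ∣ C := by
  intro m
  induction m using Nat.strong_induction_on with
  | _ m IH =>
    intro a b c hs hnz
    by_cases h3 : (3:ℤ) ∣ a ∧ (3:ℤ) ∣ b ∧ (3:ℤ) ∣ c
    · obtain ⟨⟨a1, ha⟩, ⟨b1, hb⟩, ⟨c1, hc⟩⟩ := h3
      subst ha hb hc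
      have hnz1 : ¬ (a1 = 0 ∧ b1 = 0 ∧ c1 = 0) := by
        rintro ⟨rfl, rfl, rfl⟩; exact hnz ⟨by ring, by ring, by ring⟩
      have h9 : (m:ℤ) = 9*(a1^2 + b1^2 + c1^2) := by linear_combination -hs
      have hm1' : (((a1^2 + b1^2 + c1^2).toNat : ℕ) : ℤ) = a1^2 + b1^2 + c1^2 :=
        Int.toNat_of_nonneg (by positivity)
      set m1 : ℕ := (a1^2 + b1^2 + c1^2).toNat with hm1
      have hm1pos : 1 ≤ (m1:ℤ) := by
        rcases lt_or_ge (0:ℤ) (m1:ℤ) with h|h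
        · omega
        · exfalso
          have hz : a1^2 + b1^2 + c1^2 = 0 := by omega
          have ha0 : a1 = 0 := by nlinarith [sq_nonneg a1, sq_nonneg b1, sq_nonneg c1]
          have hb0 : b1 = 0 := by nlinarith [sq_nonneg a1, sq_nonneg b1, sq_nonneg c1]
          have hc0 : c1 = 0 := by nlinarith [sq_nonneg a1, sq_nonneg b1, sq_nonneg c1]
          exact hnz1 ⟨ha0, hb0, hc0⟩
      have hm9 : (m:ℤ) = 9*(m1:ℤ) := by rw [hm1']; exact h9
      have hlt : m1 < m := by omega
      obtain ⟨A1, B1, C1, hS1, hA1, hB1, hC1⟩ := IH m1 hlt a1 b1 c1 hm1'.symm hnz1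
      obtain ⟨A, B, C, hS, hA, hB, hC⟩ := q4rstep A1 B1 C1 (by tauto)
      refine ⟨A, B, C, ?_, hA, hB, hC⟩
      rw [hS]
      rw [hm9]
      linear_combination 9*hS1
    · obtain ⟨A, B, C, hS, hA, hB, hC⟩ := q4rstep a b c h3
      refine ⟨A, B, C, ?_, hA, hB, hC⟩
      rw [hS, hs]

private lemma q4sq3 (t : ℤ) (h : ¬ (3:ℤ) ∣ t) : ∃ p : ℤ, t^2 - 1 = 3*p := by
  obtain ⟨k, hk⟩ : ∃ k, t = 3*k+1 ∨ t = 3*k+2 := ⟨t/3, by omega⟩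
  rcases hk with h1|h1
  · exact ⟨3*k^2 + 2*k, by rw [h1]; ring⟩
  · exact ⟨3*k^2 + 4*k + 1, by rw [h1]; ring⟩

private lemma q4z1 : ∀ A B C D : ZMod 3, C = D → A = B + D → A^2+B^2+C^2+D^2 = 1 →
    (A^2 - B^2 - C^2 - D^2 ≠ 0 ∧ A*B ≠ 0 ∧ A*C ≠ 0 ∧ A*D ≠ 0) := by decide

private lemma q4z2 : ∀ A B C D : ZMod 3, C = D → A = B + D → A^2+B^2+C^2+D^2 = 2 →
    (A ≠ 0 ∧ B ≠ 0 ∧ C = 0 ∧ D = 0) := by decide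

private lemma q4two (t : ZMod 3) (h : 2*t = 0) : t = 0 := by revert t h; decide

set_option maxHeartbeats 2000000 in
private lemma q4k1 (N : ℕ)
    (IH : ∀ m : ℕ, m < N → ∀ n' : ℤ, n' = (m:ℤ) → 2 ≤ n' →
      ∃ w x y z : ℤ,
        2 * w ^ 2 + 3 * x ^ 2 + 4 * y ^ 2 + 6 * z ^ 2
          - 2 * w * x + 2 * w * z + 2 * x * y + 4 * y * z = n')
    (n : ℤ) (hnN : n = (N:ℤ)) (hn2 : 2 ≤ n)
    (E a b c : ℤ) (hE : ¬ (3:ℤ) ∣ E) (hEpos : 0 ≤ E)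
    (hsum : E^2 + 9*(a^2 + b^2 + c^2) = n) :
    ∃ w x y z : ℤ,
      2 * w ^ 2 + 3 * x ^ 2 + 4 * y ^ 2 + 6 * z ^ 2
        - 2 * w * x + 2 * w * z + 2 * x * y + 4 * y * z = n := by
  by_cases hz : a = 0 ∧ b = 0 ∧ c = 0
  · -- n = E^2
    obtain ⟨rfl, rfl, rfl⟩ := hz
    have hn2' : E^2 = n := by linear_combination hsum
    have hE0 : E ≠ 0 := by intro h; rw [h] at hE; exact hE (dvd_zero 3)
    have hE1 : E ≠ 1 := by
      intro h; rw [h] at hn2'; norm_num at hn2'; omega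
    have hE2 : 2 ≤ E := by omega
    rcases Int.even_or_odd E with ⟨F, hF⟩ | hodd
    · -- E = F + F
      have hnF : n = 4*F^2 := by rw [← hn2', hF]; ring
      have hF1 : 1 ≤ F := by omega
      by_cases hFone : F = 1
      · refine ⟨0, 0, -1, 0, ?_⟩
        rw [hnF, hFone]; norm_num
      · have hF2 : 2 ≤ F := by omega
        have h4 : (4:ℤ) ≤ F^2 := by nlinarith
        have hlt : F^2 < n := by nlinarith
        have hmF : (((F^2).toNat : ℕ) : ℤ) = F^2 := Int.toNat_of_nonneg (by positivity)
        have hltN : (F^2).toNat < N := by omega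
        obtain ⟨w, x, y, z, h⟩ := IH (F^2).toNat hltN (F^2) hmF.symm (by linarith)
        exact ⟨2*w, 2*x, 2*y, 2*z, by linear_combination 4*h - hnF⟩
    · -- E odd
      have hEltn : E < n := by nlinarith
      have hEt : ((E.toNat : ℕ) : ℤ) = E := Int.toNat_of_nonneg hEpos
      have hEtN : E.toNat < N := by omega
      obtain ⟨w0, x0, y0, z0, hq⟩ := IH E.toNat hEtN E hEt.symm hE2
      set A : ℤ := -w0 + y0 with hAdef
      set B : ℤ := -w0 + x0 - y0 - z0 with hBdef
      set C : ℤ := -x0 - y0 - 2*z0 with hCdef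
      set D : ℤ := -x0 - y0 + z0 with hDdef
      have hsum2 : A^2 + B^2 + C^2 + D^2 = E := by
        rw [hAdef, hBdef, hCdef, hDdef]; linear_combination hq
      have hCD : (3:ℤ) ∣ (C - D) := ⟨-z0, by rw [hCdef, hDdef]; ring⟩
      have hABD : (3:ℤ) ∣ (A - B - D) := ⟨y0, by rw [hAdef, hBdef, hDdef]; ring⟩
      -- ZMod facts
      have eCD : ((C:ℤ) : ZMod 3) = ((D:ℤ) : ZMod 3) := by
        have h0 : ((C - D : ℤ) : ZMod 3) = 0 :=
          (ZMod.intCast_zmod_eq_zero_iff_dvd _ 3).mpr (by exact_mod_cast hCD)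
        push_cast at h0
        exact sub_eq_zero.mp h0
      have eABD : ((A:ℤ) : ZMod 3) = ((B:ℤ) : ZMod 3) + ((D:ℤ) : ZMod 3) := by
        have h0 : ((A - B - D : ℤ) : ZMod 3) = 0 :=
          (ZMod.intCast_zmod_eq_zero_iff_dvd _ 3).mpr (by exact_mod_cast hABD)
        push_cast at h0
        linear_combination h0
      have hE3 : E % 3 = 1 ∨ E % 3 = 2 := by omega
      rcases hE3 with hE3 | hE3
      · -- all-units rep via squaring
        obtain ⟨k, hk⟩ : ∃ k, E = 3*k + 1 := ⟨E/3, by omega⟩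
        have eS : ((A:ℤ) : ZMod 3)^2 + ((B:ℤ) : ZMod 3)^2 + ((C:ℤ) : ZMod 3)^2
            + ((D:ℤ) : ZMod 3)^2 = 1 := by
          have h0 : ((A^2 + B^2 + C^2 + D^2 : ℤ) : ZMod 3) = ((3*k + 1 : ℤ) : ZMod 3) := by
            rw [hsum2, hk]
          push_cast at h0
          rw [show ((3:ZMod 3)) = 0 by decide] at h0
          rw [h0]; ring
        obtain ⟨u1, u2, u3, u4⟩ := q4z1 _ _ _ _ eCD eABD eS
        have hP : ¬ (3:ℤ) ∣ (A^2 - B^2 - C^2 - D^2) := by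
          intro hd
          apply u1
          have h0 : ((A^2 - B^2 - C^2 - D^2 : ℤ) : ZMod 3) = 0 :=
            (ZMod.intCast_zmod_eq_zero_iff_dvd _ 3).mpr (by exact_mod_cast hd)
          push_cast at h0
          linear_combination h0
        have hAB : ¬ (3:ℤ) ∣ (2*(A*B)) := by
          intro hd
          apply u2
          have h0 : ((2*(A*B) : ℤ) : ZMod 3) = 0 :=
            (ZMod.intCast_zmod_eq_zero_iff_dvd _ 3).mpr (by exact_mod_cast hd)
          push_cast at h0
          exact q4two _ h0
        have hAC : ¬ (3:ℤ) ∣ (2*(A*C)) := by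
          intro hd
          apply u3
          have h0 : ((2*(A*C) : ℤ) : ZMod 3) = 0 :=
            (ZMod.intCast_zmod_eq_zero_iff_dvd _ 3).mpr (by exact_mod_cast hd)
          push_cast at h0
          exact q4two _ h0
        have hAD : ¬ (3:ℤ) ∣ (2*(A*D)) := by
          intro hd
          apply u4
          have h0 : ((2*(A*D) : ℤ) : ZMod 3) = 0 :=
            (ZMod.intCast_zmod_eq_zero_iff_dvd _ 3).mpr (by exact_mod_cast hd)
          push_cast at h0
          exact q4two _ h0
        obtain ⟨w, x, y, z, h⟩ :=
          q4sort (A^2 - B^2 - C^2 - D^2) (2*(A*B)) (2*(A*C)) (2*(A*D)) (by tauto)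
        refine ⟨w, x, y, z, ?_⟩
        rw [h]
        linear_combination (A^2 + B^2 + C^2 + D^2 + E)*hsum2 + hn2'
      · -- E ≡ 2 mod 3 : pattern (unit, unit, 0, 0)
        obtain ⟨k, hk⟩ : ∃ k, E = 3*k + 2 := ⟨E/3, by omega⟩
        have eS : ((A:ℤ) : ZMod 3)^2 + ((B:ℤ) : ZMod 3)^2 + ((C:ℤ) : ZMod 3)^2
            + ((D:ℤ) : ZMod 3)^2 = 2 := by
          have h0 : ((A^2 + B^2 + C^2 + D^2 : ℤ) : ZMod 3) = ((3*k + 2 : ℤ) : ZMod 3) := by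
            rw [hsum2, hk]
          push_cast at h0
          rw [show ((3:ZMod 3)) = 0 by decide] at h0
          rw [h0]; ring
        obtain ⟨zA, zB, zC, zD⟩ := q4z2 _ _ _ _ eCD eABD eS
        have hA : ¬ (3:ℤ) ∣ A := fun hd =>
          zA ((ZMod.intCast_zmod_eq_zero_iff_dvd _ 3).mpr (by exact_mod_cast hd))
        have hB : ¬ (3:ℤ) ∣ B := fun hd =>
          zB ((ZMod.intCast_zmod_eq_zero_iff_dvd _ 3).mpr (by exact_mod_cast hd))
        have hC3 : (3:ℤ) ∣ C := by
          have := (ZMod.intCast_zmod_eq_zero_iff_dvd C 3).mp zC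
          exact_mod_cast this
        have hD3 : (3:ℤ) ∣ D := by
          have := (ZMod.intCast_zmod_eq_zero_iff_dvd D 3).mp zD
          exact_mod_cast this
        obtain ⟨C1, hC1⟩ := hC3
        obtain ⟨D1, hD1⟩ := hD3
        obtain ⟨p, hp⟩ := q4sq3 A hA
        obtain ⟨q, hqq⟩ := q4sq3 B hB
        have hab : ¬ (3:ℤ) ∣ (A*B) := by
          intro hd
          rcases (Int.prime_three.dvd_mul).mp hd with h|h
          · exact hA h
          · exact hB h
        by_cases hbj : (B*C - A*D = 0 ∧ A^2 - B^2 + C^2 - D^2 = 0)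
        · by_cases hbk : (B*D + A*C = 0 ∧ A^2 - B^2 - C^2 + D^2 = 0)
          · -- contradiction : E would be even
            exfalso
            have h2ab : 2*A^2 = 2*B^2 := by linear_combination hbj.2 + hbk.2
            have hA2B2 : A^2 = B^2 := mul_left_cancel₀ two_ne_zero h2ab
            have h2cd : 2*C^2 = 2*D^2 := by linear_combination hbj.2 - hbk.2
            have hC2D2 : C^2 = D^2 := mul_left_cancel₀ two_ne_zero h2cd
            have hcd : (A^2 + B^2)*(C*D) = 0 := by
              linear_combination B*D*hbj.1 + A*D*hbk.1
            have hA0 : A ≠ 0 := by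
              intro h0; exact hA (by rw [h0]; exact dvd_zero 3)
            have hApos : 0 < A^2 := by positivity
            have hCD0 : C*D = 0 := by
              rcases mul_eq_zero.mp hcd with h|h
              · nlinarith [sq_nonneg B]
              · exact h
            have hC0 : C = 0 ∧ D = 0 := by
              rcases mul_eq_zero.mp hCD0 with h|h
              · refine ⟨h, ?_⟩
                have : D^2 = 0 := by rw [← hC2D2, h]; ring
                exact pow_eq_zero_iff (by norm_num) |>.mp this
              · refine ⟨?_, h⟩
                have : C^2 = 0 := by rw [hC2D2, h]; ring
                exact pow_eq_zero_iff (by norm_num) |>.mp this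
            obtain ⟨k2, hk2⟩ := hodd
            have hE2A : E = 2*A^2 := by
              rw [← hsum2, hC0.1, hC0.2]; linarith [hA2B2]
            set t : ℤ := A^2 with ht
            omega
          · -- use the k-type triple
            have hsk : B*D + A*C = 3*(B*D1 + A*C1) := by rw [hC1, hD1]; ring
            have ht : A^2 - B^2 - C^2 + D^2 = 3*(p - q - 3*C1^2 + 3*D1^2) := by
              rw [hC1, hD1]; linear_combination hp - hqq
            set e : ℤ := B*D1 + A*C1 with hedef
            set t1 : ℤ := p - q - 3*C1^2 + 3*D1^2 with ht1def
            have hm' : ((((2*e)^2 + t1^2).toNat : ℕ) : ℤ) = (2*e)^2 + t1^2 :=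
              Int.toNat_of_nonneg (by positivity)
            have hnz : ¬ (2*e = 0 ∧ t1 = 0 ∧ (0:ℤ) = 0) := by
              rintro ⟨h1, h2, -⟩
              apply hbk
              constructor
              · have he0 : e = 0 := by omega
                rw [hsk, he0]; ring
              · rw [ht, h2]; ring
            obtain ⟨X, Y, Z, hXYZ, hX, hY, hZ⟩ :=
              q4R ((2*e)^2 + t1^2).toNat (2*e) t1 0 (by rw [hm']; ring) hnz
            have h1 : X^2 + Y^2 + Z^2 = (2*(B*D + A*C))^2 + (A^2 - B^2 - C^2 + D^2)^2 := by
              rw [hXYZ, hm', hsk, ht]; ring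
            have hu : ¬ (3:ℤ) ∣ (2*(C*D - A*B)) := by
              intro hd
              rcases (Int.prime_three.dvd_mul).mp hd with h|h
              · norm_num at h
              · have hCDdvd : (3:ℤ) ∣ C*D := ⟨C1*D, by rw [hC1]; ring⟩
                have h2 := dvd_sub hCDdvd h
                have e2 : C*D - (C*D - A*B) = A*B := by ring
                rw [e2] at h2
                exact hab h2
            obtain ⟨w, x, y, z, h⟩ := q4sort (2*(C*D - A*B)) X Y Z (by tauto)
            refine ⟨w, x, y, z, ?_⟩
            rw [h]
            linear_combination h1 + (A^2 + B^2 + C^2 + D^2 + E)*hsum2 + hn2'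
        · -- use the j-type triple
          have hsj : B*C - A*D = 3*(B*C1 - A*D1) := by rw [hC1, hD1]; ring
          have ht : A^2 - B^2 + C^2 - D^2 = 3*(p - q + 3*C1^2 - 3*D1^2) := by
            rw [hC1, hD1]; linear_combination hp - hqq
          set e : ℤ := B*C1 - A*D1 with hedef
          set t1 : ℤ := p - q + 3*C1^2 - 3*D1^2 with ht1def
          have hm' : ((((2*e)^2 + t1^2).toNat : ℕ) : ℤ) = (2*e)^2 + t1^2 :=
            Int.toNat_of_nonneg (by positivity)
          have hnz : ¬ (2*e = 0 ∧ t1 = 0 ∧ (0:ℤ) = 0) := by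
            rintro ⟨h1, h2, -⟩
            apply hbj
            constructor
            · have he0 : e = 0 := by omega
              rw [hsj, he0]; ring
            · rw [ht, h2]; ring
          obtain ⟨X, Y, Z, hXYZ, hX, hY, hZ⟩ :=
            q4R ((2*e)^2 + t1^2).toNat (2*e) t1 0 (by rw [hm']; ring) hnz
          have h1 : X^2 + Y^2 + Z^2 = (2*(B*C - A*D))^2 + (A^2 - B^2 + C^2 - D^2)^2 := by
            rw [hXYZ, hm', hsj, ht]; ring
          have hu : ¬ (3:ℤ) ∣ (2*(C*D + A*B)) := by
            intro hd
            rcases (Int.prime_three.dvd_mul).mp hd with h|h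
            · norm_num at h
            · have hCDdvd : (3:ℤ) ∣ C*D := ⟨C1*D, by rw [hC1]; ring⟩
              have h2 := dvd_sub h hCDdvd
              have e2 : C*D + A*B - C*D = A*B := by ring
              rw [e2] at h2
              exact hab h2
          obtain ⟨w, x, y, z, h⟩ := q4sort (2*(C*D + A*B)) X Y Z (by tauto)
          refine ⟨w, x, y, z, ?_⟩
          rw [h]
          linear_combination h1 + (A^2 + B^2 + C^2 + D^2 + E)*hsum2 + hn2'
  · -- m ≥ 1 : rotate the triple
    have hm' : (((a^2 + b^2 + c^2).toNat : ℕ) : ℤ) = a^2 + b^2 + c^2 :=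
      Int.toNat_of_nonneg (by positivity)
    obtain ⟨X, Y, Z, hXYZ, hX, hY, hZ⟩ :=
      q4R (a^2 + b^2 + c^2).toNat a b c hm'.symm hz
    have h1 : X^2 + Y^2 + Z^2 = 9*(a^2 + b^2 + c^2) := by rw [hXYZ, hm']
    obtain ⟨w, x, y, z, h⟩ := q4sort E X Y Z (by tauto)
    refine ⟨w, x, y, z, ?_⟩
    rw [h]
    linear_combination h1 + hsum

set_option maxHeartbeats 1000000 in
theorem q4_represents_all_integers_gt_one :
    ∀ n : ℤ, 1 < n → ∃ w x y z : ℤ,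
      2 * w ^ 2 + 3 * x ^ 2 + 4 * y ^ 2 + 6 * z ^ 2
        - 2 * w * x + 2 * w * z + 2 * x * y + 4 * y * z = n := by
  have key : ∀ N : ℕ, ∀ n : ℤ, n = (N:ℤ) → 2 ≤ n →
      ∃ w x y z : ℤ,
        2 * w ^ 2 + 3 * x ^ 2 + 4 * y ^ 2 + 6 * z ^ 2
          - 2 * w * x + 2 * w * z + 2 * x * y + 4 * y * z = n := by
    intro N
    induction N using Nat.strong_induction_on with
    | _ N IH =>
      intro n hnN hn2
      obtain ⟨a0, b0, c0, d0, hs⟩ := Nat.sum_four_squares N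
      have hsum : ((a0:ℤ))^2 + ((b0:ℤ))^2 + ((c0:ℤ))^2 + ((d0:ℤ))^2 = n := by
        rw [hnN]; exact_mod_cast hs
      set a : ℤ := (a0:ℤ) with hadef
      set b : ℤ := (b0:ℤ) with hbdef
      set c : ℤ := (c0:ℤ) with hcdef
      set d : ℤ := (d0:ℤ) with hddef
      by_cases hk : (((¬ (3:ℤ) ∣ a) ∧ (3:ℤ) ∣ b ∧ (3:ℤ) ∣ c ∧ (3:ℤ) ∣ d) ∨
          ((3:ℤ) ∣ a ∧ (¬ (3:ℤ) ∣ b) ∧ (3:ℤ) ∣ c ∧ (3:ℤ) ∣ d) ∨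
          ((3:ℤ) ∣ a ∧ (3:ℤ) ∣ b ∧ (¬ (3:ℤ) ∣ c) ∧ (3:ℤ) ∣ d) ∨
          ((3:ℤ) ∣ a ∧ (3:ℤ) ∣ b ∧ (3:ℤ) ∣ c ∧ (¬ (3:ℤ) ∣ d)))
      · rcases hk with ⟨hA, hB, hC, hD⟩ | ⟨hA, hB, hC, hD⟩ | ⟨hA, hB, hC, hD⟩ | ⟨hA, hB, hC, hD⟩
        · obtain ⟨b1, hb1⟩ := hB
          obtain ⟨c1, hc1⟩ := hC
          obtain ⟨d1, hd1⟩ := hD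
          exact q4k1 N IH n hnN hn2 a b1 c1 d1 hA (by positivity)
            (by rw [hb1, hc1, hd1] at hsum; linear_combination hsum)
        · obtain ⟨a1, ha1⟩ := hA
          obtain ⟨c1, hc1⟩ := hC
          obtain ⟨d1, hd1⟩ := hD
          exact q4k1 N IH n hnN hn2 b a1 c1 d1 hB (by positivity)
            (by rw [ha1, hc1, hd1] at hsum; linear_combination hsum)
        · obtain ⟨a1, ha1⟩ := hA
          obtain ⟨b1, hb1⟩ := hB
          obtain ⟨d1, hd1⟩ := hD
          exact q4k1 N IH n hnN hn2 c a1 b1 d1 hC (by positivity)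
            (by rw [ha1, hb1, hd1] at hsum; linear_combination hsum)
        · obtain ⟨a1, ha1⟩ := hA
          obtain ⟨b1, hb1⟩ := hB
          obtain ⟨c1, hc1⟩ := hC
          exact q4k1 N IH n hnN hn2 d a1 b1 c1 hD (by positivity)
            (by rw [ha1, hb1, hc1] at hsum; linear_combination hsum)
      · obtain ⟨w, x, y, z, h⟩ := q4sort a b c d hk
        exact ⟨w, x, y, z, by rw [h]; exact hsum⟩
  intro n hn
  exact key n.toNat n (Int.toNat_of_nonneg (by omega)).symm (by omega)
end

section
/- Let Δ be an integer with Δ < 0 and Δ ≡ 0 or 1 (mod 4). If there exist coprime integers x and y such that x² + Δ·x·y + ((Δ² − Δ)/4)·y² = 2, then −Δ ∈ {4, 7, 8}. -/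
theorem cyclic_isogeny_degree_2_discriminants
    (Δ : ℤ) (hneg : Δ < 0) (hcong : Δ % 4 = 0 ∨ Δ % 4 = 1)
    (h : ∃ x y : ℤ, Int.gcd x y = 1 ∧
      x ^ 2 + Δ * x * y + ((Δ ^ 2 - Δ) / 4) * y ^ 2 = 2) :
    -Δ ∈ ({4, 7, 8} : Set ℤ) := by
  obtain ⟨x, y, hg, he⟩ := h
  have hd : (4 : ℤ) ∣ Δ ^ 2 - Δ := by
    rcases hcong with h0 | h1
    · have : (4 : ℤ) ∣ Δ := Int.dvd_of_emod_eq_zero h0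
      obtain ⟨c, rfl⟩ := this
      exact ⟨4 * c ^ 2 - c, by ring⟩
    · have : (4 : ℤ) ∣ Δ - 1 := by omega
      obtain ⟨c, hc⟩ := this
      exact ⟨Δ * c, by nlinarith⟩
  have hk : 4 * ((Δ ^ 2 - Δ) / 4) = Δ ^ 2 - Δ := Int.mul_ediv_cancel' hd
  have he4 : (2 * x + Δ * y) ^ 2 - Δ * y ^ 2 = 8 := by
    linear_combination 4 * he - y ^ 2 * hk
  have hΔ3 : Δ ≤ -3 := by omega
  have hy2 : y ^ 2 ≤ 2 := by nlinarith [sq_nonneg (2 * x + Δ * y)]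
  have hyl : -1 ≤ y := by nlinarith
  have hyr : y ≤ 1 := by nlinarith
  simp only [Set.mem_insert_iff, Set.mem_singleton_iff]
  interval_cases y
  · -- y = -1
    set t := 2 * x + Δ * (-1) with ht
    have ht2 : t ^ 2 = 8 + Δ := by linarith [he4]
    have ht5 : t ^ 2 ≤ 5 := by omega
    have htl : -3 ≤ t := by nlinarith
    have htr : t ≤ 3 := by nlinarith
    interval_cases t <;> omega
  · -- y = 0
    have hx1 : x.natAbs = 1 := by simpa using hg
    have : x = 1 ∨ x = -1 := by
      rcases Int.natAbs_eq x with hx | hx <;> rw [hx1] at hx <;> omega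
    rcases this with rfl | rfl <;> norm_num at he
  · -- y = 1
    set t := 2 * x + Δ * 1 with ht
    have ht2 : t ^ 2 = 8 + Δ := by linarith [he4]
    have ht5 : t ^ 2 ≤ 5 := by omega
    have htl : -3 ≤ t := by nlinarith
    have htr : t ≤ 3 := by nlinarith
    interval_cases t <;> omega
end

section
/- Let Δ be an integer with Δ < 0 and Δ ≡ 0 or 1 (mod 4). If there exist coprime integers x and y such that x² + Δ·x·y + ((Δ² − Δ)/4)·y² = 3, then −Δ ∈ {3, 8, 11, 12}. -/
theorem cyclic_isogeny_degree_3_discriminants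
    (Δ : ℤ) (hneg : Δ < 0) (hcong : Δ % 4 = 0 ∨ Δ % 4 = 1)
    (h : ∃ x y : ℤ, Int.gcd x y = 1 ∧
      x ^ 2 + Δ * x * y + ((Δ ^ 2 - Δ) / 4) * y ^ 2 = 3) :
    -Δ ∈ ({3, 8, 11, 12} : Set ℤ) := by
  obtain ⟨x, y, hg, heq⟩ := h
  have hdvd : (4:ℤ) ∣ Δ ^ 2 - Δ := by
    have hfac : Δ ^ 2 - Δ = Δ * (Δ - 1) := by ring
    rcases hcong with h0 | h1
    · exact hfac ▸ Dvd.dvd.mul_right (Int.dvd_of_emod_eq_zero h0) _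
    · exact hfac ▸ Dvd.dvd.mul_left (by omega : (4:ℤ) ∣ Δ - 1) _
  have hc : 4 * ((Δ ^ 2 - Δ) / 4) = Δ ^ 2 - Δ := Int.mul_ediv_cancel' hdvd
  have key : (2 * x + Δ * y) ^ 2 + (-Δ) * y ^ 2 = 12 := by
    linear_combination 4 * heq - y ^ 2 * hc
  have hy : y ≠ 0 := by
    intro hy0
    subst hy0
    have hx : x = 1 ∨ x = -1 := by
      have := hg
      simp [Int.gcd] at this
      omega
    rcases hx with rfl | rfl <;> simp at heq
  have hy1 : 1 ≤ y ^ 2 := by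
    rcases (by omega : y ≤ -1 ∨ 1 ≤ y) with h' | h' <;> nlinarith
  have hD : 1 ≤ -Δ := by omega
  set s := 2 * x + Δ * y with hs
  have hs2 : s ^ 2 ≤ 12 := by nlinarith
  have hy2 : y ^ 2 ≤ 12 := by nlinarith
  have hsb : -3 ≤ s ∧ s ≤ 3 := by constructor <;> nlinarith
  have hyb : -3 ≤ y ∧ y ≤ 3 := by constructor <;> nlinarith
  obtain ⟨hs1, hs3⟩ := hsb
  obtain ⟨hy3, hy4⟩ := hyb
  simp only [Set.mem_insert_iff, Set.mem_singleton_iff]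
  clear_value s
  interval_cases s <;> interval_cases y <;> omega
end

section
/- Let Δ be an integer with Δ < 0 and Δ ≡ 0 or 1 (mod 4). If there exist coprime integers x and y such that x² + Δ·x·y + ((Δ² − Δ)/4)·y² = 4, then −Δ ∈ {7, 12, 15, 16}. -/
/-!
Completing the square, `4 (x² + Δxy + cy²) = (2x + Δy)² - Δy²`, so a representation of `4`
gives `u² + |Δ| y² = 16` with `u = 2x + Δy`. Since the form takes an even value and
`gcd(x, y) = 1`, `y` is odd (if `y` were even, so would be `x²`). The congruence condition forces
`|Δ| ≥ 3`, hence `y² = 1` and `-Δ = 16 - u²` with `u² < 16`, i.e. `-Δ ∈ {16, 15, 12, 7}`.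
-/

lemma Int.four_dvd_sq_sub_self {Δ : ℤ} (h : Δ % 4 = 0 ∨ Δ % 4 = 1) : 4 ∣ Δ ^ 2 - Δ := by
  rcases h with h0 | h1
  · obtain ⟨k, rfl⟩ := Int.dvd_of_emod_eq_zero h0
    exact ⟨k * (4 * k - 1), by ring⟩
  · obtain ⟨k, hk⟩ : (4 : ℤ) ∣ Δ - 1 := by omega
    exact ⟨Δ * k, by linear_combination Δ * hk⟩

lemma Int.odd_right_of_gcd_eq_one_of_even {x y b c : ℤ} (hg : Int.gcd x y = 1)
    (he : Even (x ^ 2 + b * x * y + c * y ^ 2)) : Odd y := by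
  by_contra hy
  obtain ⟨k, rfl⟩ := (Int.not_odd_iff_even.mp hy).two_dvd
  have hx : (2 : ℤ) ∣ x := by
    refine Int.prime_two.dvd_of_dvd_pow (n := 2) ?_
    have hsplit : x ^ 2 =
        (x ^ 2 + b * x * (2 * k) + c * (2 * k) ^ 2) - 2 * (b * x * k + 2 * c * k ^ 2) := by
      ring
    rw [hsplit]
    exact dvd_sub he.two_dvd (dvd_mul_right _ _)
  have hgcd : (2 : ℤ) ∣ (Int.gcd x (2 * k) : ℤ) := Int.dvd_coe_gcd hx (dvd_mul_right _ _)
  rw [hg] at hgcd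
  norm_num at hgcd

lemma Int.sq_eq_one_of_odd_of_sq_lt_nine {y : ℤ} (hy : Odd y) (h : y ^ 2 < 9) : y ^ 2 = 1 := by
  obtain ⟨hl, hu⟩ := abs_lt_of_sq_lt_sq' (a := y) (b := 3) (by norm_num [h]) (by norm_num)
  have hmod : y % 2 = 1 := Int.odd_iff.mp hy
  rcases (by omega : y = 1 ∨ y = -1) with rfl | rfl <;> norm_num

lemma Int.neg_mem_of_sq_eq_sixteen_add {Δ u : ℤ} (hneg : Δ < 0) (h : u ^ 2 = 16 + Δ) :
    -Δ ∈ ({7, 12, 15, 16} : Set ℤ) := by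
  obtain ⟨hl, hu⟩ := abs_lt_of_sq_lt_sq' (a := u) (b := 4) (by norm_num; omega) (by norm_num)
  obtain rfl : Δ = u ^ 2 - 16 := by omega
  interval_cases u <;> norm_num

theorem cyclic_isogeny_degree_4_discriminants
    (Δ : ℤ) (hneg : Δ < 0) (hcong : Δ % 4 = 0 ∨ Δ % 4 = 1)
    (h : ∃ x y : ℤ, Int.gcd x y = 1 ∧
      x ^ 2 + Δ * x * y + ((Δ ^ 2 - Δ) / 4) * y ^ 2 = 4) :
    -Δ ∈ ({7, 12, 15, 16} : Set ℤ) := by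
  obtain ⟨x, y, hg, he⟩ := h
  have hc : 4 * ((Δ ^ 2 - Δ) / 4) = Δ ^ 2 - Δ :=
    Int.mul_ediv_cancel' (Int.four_dvd_sq_sub_self hcong)
  have heven : Even (x ^ 2 + Δ * x * y + ((Δ ^ 2 - Δ) / 4) * y ^ 2) := by rw [he]; decide
  have hy : Odd y := Int.odd_right_of_gcd_eq_one_of_even hg heven
  have hsquare : (2 * x + Δ * y) ^ 2 - Δ * y ^ 2 = 16 := by
    linear_combination 4 * he - y ^ 2 * hc
  have hΔ : Δ ≤ -3 := by omega
  have hy1 : y ^ 2 = 1 :=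
    Int.sq_eq_one_of_odd_of_sq_lt_nine hy (by nlinarith [sq_nonneg (2 * x + Δ * y), sq_nonneg y])
  exact Int.neg_mem_of_sq_eq_sixteen_add hneg (u := 2 * x + Δ * y)
    (by linear_combination hsquare + Δ * hy1)
end

section
/- Let Δ be an integer with Δ < 0 and Δ ≡ 0 or 1 (mod 4). If there exist coprime integers x and y such that x² + Δ·x·y + ((Δ² − Δ)/4)·y² = 5, then −Δ ∈ {4, 11, 16, 19, 20}. -/
lemma sq_small_cases (s : ℤ) (h : s ^ 2 ≤ 20) :
    s ^ 2 = 0 ∨ s ^ 2 = 1 ∨ s ^ 2 = 4 ∨ s ^ 2 = 9 ∨ s ^ 2 = 16 := by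
  have h1 : s ≤ 4 := by nlinarith
  have h2 : -4 ≤ s := by nlinarith
  interval_cases s <;> norm_num

theorem cyclic_isogeny_degree_5_discriminants
    (Δ : ℤ) (hneg : Δ < 0) (hcong : Δ % 4 = 0 ∨ Δ % 4 = 1)
    (h : ∃ x y : ℤ, Int.gcd x y = 1 ∧
      x ^ 2 + Δ * x * y + ((Δ ^ 2 - Δ) / 4) * y ^ 2 = 5) :
    -Δ ∈ ({4, 11, 16, 19, 20} : Set ℤ) := by
  obtain ⟨x, y, hg, heq⟩ := h
  -- 4 divides Δ² - Δ
  have h4 : (4 : ℤ) ∣ Δ ^ 2 - Δ := by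
    have hfac : Δ ^ 2 - Δ = Δ * (Δ - 1) := by ring
    rw [hfac]
    rcases hcong with hc | hc
    · exact (Int.dvd_of_emod_eq_zero hc).mul_right (Δ - 1)
    · exact (Int.dvd_of_emod_eq_zero (by omega : (Δ - 1) % 4 = 0)).mul_left Δ
  have hk : 4 * ((Δ ^ 2 - Δ) / 4) = Δ ^ 2 - Δ := Int.mul_ediv_cancel' h4
  have key : (2 * x + Δ * y) ^ 2 - Δ * y ^ 2 = 20 := by
    linear_combination 4 * heq - y ^ 2 * hk
  -- y ≠ 0
  have hy : y ≠ 0 := by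
    rintro rfl
    simp at hg heq
    rcases Int.natAbs_eq_iff.mp hg with h1 | h1 <;> rw [h1] at heq <;> norm_num at heq
  obtain ⟨s, key⟩ : ∃ s : ℤ, s ^ 2 - Δ * y ^ 2 = 20 := ⟨_, key⟩
  have hΔy : Δ * y ^ 2 ≤ 0 := mul_nonpos_of_nonpos_of_nonneg (le_of_lt hneg) (sq_nonneg y)
  have hsb : s ^ 2 ≤ 20 := by linarith
  have hyb : y ^ 2 ≤ 20 := by
    have h2 : (0 : ℤ) ≤ (-Δ - 1) * y ^ 2 := mul_nonneg (by linarith) (sq_nonneg y)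
    nlinarith [sq_nonneg s]
  have hyv : y ^ 2 = 1 ∨ y ^ 2 = 4 ∨ y ^ 2 = 9 ∨ y ^ 2 = 16 := by
    rcases sq_small_cases y hyb with h0 | h0 | h0 | h0 | h0
    · exact absurd (pow_eq_zero_iff (two_ne_zero) |>.mp h0) hy
    all_goals tauto
  simp only [Set.mem_insert_iff, Set.mem_singleton_iff]
  rcases sq_small_cases s hsb with hs | hs | hs | hs | hs <;>
    rcases hyv with hv | hv | hv | hv <;>
    rw [hs, hv] at key <;> omega
end

section
/- Let Δ be an integer with Δ < 0 and Δ ≡ 0 or 1 (mod 4). If there exist coprime integers x and y such that x² + Δ·x·y + ((Δ² − Δ)/4)·y² = 6, then −Δ ∈ {8, 15, 20, 23, 24}. -/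
theorem cyclic_isogeny_degree_6_discriminants
    (Δ : ℤ) (hneg : Δ < 0) (hcong : Δ % 4 = 0 ∨ Δ % 4 = 1)
    (h : ∃ x y : ℤ, Int.gcd x y = 1 ∧
      x ^ 2 + Δ * x * y + ((Δ ^ 2 - Δ) / 4) * y ^ 2 = 6) :
    -Δ ∈ ({8, 15, 20, 23, 24} : Set ℤ) := by
  obtain ⟨x, y, hg, hq⟩ := h
  have h4 : 4 * ((Δ ^ 2 - Δ) / 4) = Δ ^ 2 - Δ := by
    rcases hcong with h | h
    · obtain ⟨k, rfl⟩ : ∃ k, Δ = 4 * k := ⟨Δ / 4, by omega⟩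
      have e : (4*k) ^ 2 - 4*k = 4 * (4*k^2 - k) := by ring
      rw [e, Int.mul_ediv_cancel_left _ (by norm_num)]
    · obtain ⟨k, rfl⟩ : ∃ k, Δ = 4 * k + 1 := ⟨Δ / 4, by omega⟩
      have e : (4*k+1) ^ 2 - (4*k+1) = 4 * (4*k^2 + k) := by ring
      rw [e, Int.mul_ediv_cancel_left _ (by norm_num)]
  obtain ⟨u, hu⟩ : ∃ u : ℤ, u = 2*x + Δ*y := ⟨_, rfl⟩
  have hU : u ^ 2 = 24 + Δ * y ^ 2 := by
    subst hu; linear_combination 4 * hq - y ^ 2 * h4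
  have hΔ3 : Δ ≤ -3 := by omega
  have key : (0:ℤ) ≤ (-Δ - 3) * y ^ 2 :=
    mul_nonneg (by linarith) (sq_nonneg y)
  have hy1 : y ≤ 2 := by nlinarith [sq_nonneg u]
  have hy2 : -2 ≤ y := by nlinarith [sq_nonneg u]
  have hu1 : u ≤ 5 := by nlinarith [sq_nonneg y]
  have hu2 : -5 ≤ u := by nlinarith [sq_nonneg y]
  clear hu hq hg h4 key
  simp only [Set.mem_insert_iff, Set.mem_singleton_iff]
  interval_cases y <;> interval_cases u <;> omega
end

section
/- Let Δ be an integer with Δ < 0 and Δ ≡ 0 or 1 (mod 4). If there exist coprime integers x and y such that x² + Δ·x·y + ((Δ² − Δ)/4)·y² = 7, then −Δ ∈ {3, 7, 12, 19, 24, 27, 28}. -/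
set_option maxHeartbeats 2000000 in
theorem cyclic_isogeny_degree_7_discriminants
    (Δ : ℤ) (hneg : Δ < 0) (hcong : Δ % 4 = 0 ∨ Δ % 4 = 1)
    (h : ∃ x y : ℤ, Int.gcd x y = 1 ∧
      x ^ 2 + Δ * x * y + ((Δ ^ 2 - Δ) / 4) * y ^ 2 = 7) :
    -Δ ∈ ({3, 7, 12, 19, 24, 27, 28} : Set ℤ) := by
  obtain ⟨x, y, hg, heq⟩ := h
  have hd : (4 : ℤ) ∣ Δ ^ 2 - Δ := by
    rcases hcong with h0 | h0
    · obtain ⟨k, hk⟩ : ∃ k, Δ = 4 * k := ⟨Δ / 4, by omega⟩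
      exact ⟨4 * k ^ 2 - k, by rw [hk]; ring⟩
    · obtain ⟨k, hk⟩ : ∃ k, Δ = 4 * k + 1 := ⟨Δ / 4, by omega⟩
      exact ⟨4 * k ^ 2 + k, by rw [hk]; ring⟩
  obtain ⟨c, hc⟩ := hd
  rw [hc, Int.mul_ediv_cancel_left _ (by norm_num)] at heq
  obtain ⟨s, key⟩ : ∃ s : ℤ, s ^ 2 - Δ * y ^ 2 = 28 :=
    ⟨2 * x + Δ * y, by linear_combination 4 * heq + y ^ 2 * hc⟩
  have hy : y ≠ 0 := by
    intro h0
    subst h0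
    have : s ^ 2 = 28 := by linarith
    have h1 : -6 ≤ s := by nlinarith [sq_nonneg (s + 6)]
    have h2 : s ≤ 6 := by nlinarith [sq_nonneg (s - 6)]
    interval_cases s <;> norm_num at this
  have hy1 : 1 ≤ y ^ 2 := by
    rcases hy.lt_or_gt with h0 | h0 <;> nlinarith
  have hΔ : -28 ≤ Δ := by nlinarith [sq_nonneg s]
  have hy2 : y ^ 2 ≤ 28 := by nlinarith [sq_nonneg s]
  have hyb1 : -5 ≤ y := by nlinarith [sq_nonneg (y + 6)]
  have hyb2 : y ≤ 5 := by nlinarith [sq_nonneg (y - 6)]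
  have hs2 : s ^ 2 ≤ 28 := by nlinarith
  have hsb1 : -5 ≤ s := by nlinarith [sq_nonneg (s + 6)]
  have hsb2 : s ≤ 5 := by nlinarith [sq_nonneg (s - 6)]
  interval_cases Δ <;>
    first
      | (revert hcong; decide)
      | (norm_num; done)
      | (exfalso; interval_cases s <;> interval_cases y <;> norm_num at key)
end

section
/- Let Δ be an integer with Δ < 0 and Δ ≡ 0 or 1 (mod 4). If there exist coprime integers x and y such that x² + Δ·x·y + ((Δ² − Δ)/4)·y² = 10, then −Δ ∈ {4, 15, 24, 31, 36, 39, 40}. -/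
set_option maxHeartbeats 2000000 in
theorem cyclic_isogeny_degree_10_discriminants
    (Δ : ℤ) (hneg : Δ < 0) (hcong : Δ % 4 = 0 ∨ Δ % 4 = 1)
    (h : ∃ x y : ℤ, Int.gcd x y = 1 ∧
      x ^ 2 + Δ * x * y + ((Δ ^ 2 - Δ) / 4) * y ^ 2 = 10) :
    -Δ ∈ ({4, 15, 24, 31, 36, 39, 40} : Set ℤ) := by
  obtain ⟨x, y, hg, he⟩ := h
  have hdvd : (4 : ℤ) ∣ Δ ^ 2 - Δ := by
    rcases hcong with hc | hc
    · obtain ⟨k, rfl⟩ : ∃ k, Δ = 4 * k := ⟨Δ / 4, by omega⟩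
      exact ⟨4 * k ^ 2 - k, by ring⟩
    · obtain ⟨k, rfl⟩ : ∃ k, Δ = 4 * k + 1 := ⟨Δ / 4, by omega⟩
      exact ⟨4 * k ^ 2 + k, by ring⟩
  have hc4 : (Δ ^ 2 - Δ) / 4 * 4 = Δ ^ 2 - Δ := Int.ediv_mul_cancel hdvd
  have key : (2 * x + Δ * y) * (2 * x + Δ * y) - Δ * (y * y) = 40 := by
    linear_combination 4 * he - y ^ 2 * hc4
  have hy0 : y ≠ 0 := by
    rintro rfl
    simp [Int.gcd] at hg
    have hx : x = 1 ∨ x = -1 := by omega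
    rcases hx with rfl | rfl <;> norm_num at he
  have hy1 : 1 ≤ y * y := by
    rcases lt_or_gt_of_ne hy0 with h' | h' <;> nlinarith
  have hΔ3 : Δ ≤ -3 := by omega
  have hΔb : -40 ≤ Δ := by nlinarith [mul_self_nonneg (2 * x + Δ * y)]
  have hyb : -3 ≤ y ∧ y ≤ 3 := by
    constructor <;> nlinarith [mul_self_nonneg (2 * x + Δ * y)]
  obtain ⟨hyl, hyu⟩ := hyb
  obtain ⟨s, hs, hsl, hsu⟩ : ∃ s : ℤ, s * s - Δ * (y * y) = 40 ∧ -6 ≤ s ∧ s ≤ 6 := by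
    refine ⟨2 * x + Δ * y, key, ?_, ?_⟩ <;> nlinarith
  clear key he hg hy0 hdvd hc4
  clear x
  interval_cases Δ <;>
    first
      | omega
      | (exfalso; interval_cases y <;> interval_cases s <;> omega)
      | norm_num
end

section
/- Let Δ be an integer with Δ < 0 and Δ ≡ 0 or 1 (mod 4). If there exist coprime integers x and y such that x² + Δ·x·y + ((Δ² − Δ)/4)·y² = 35, then −Δ ∈ {19, 31, 35, 40, 59, 76, 91, 104, 115, 124, 131, 136, 139, 140}. -/
theorem cyclic_isogeny_degree_35_discriminants
    (Δ : ℤ) (hneg : Δ < 0) (hcong : Δ % 4 = 0 ∨ Δ % 4 = 1)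
    (h : ∃ x y : ℤ, Int.gcd x y = 1 ∧
      x ^ 2 + Δ * x * y + ((Δ ^ 2 - Δ) / 4) * y ^ 2 = 35) :
    -Δ ∈ ({19, 31, 35, 40, 59, 76, 91, 104, 115, 124, 131, 136, 139, 140} : Set ℤ) := by
  obtain ⟨x, y, hg, heq⟩ := h
  have hdvd : (4 : ℤ) ∣ Δ ^ 2 - Δ := by
    rcases hcong with h1 | h1
    · obtain ⟨k, hk⟩ : (4:ℤ) ∣ Δ := Int.dvd_of_emod_eq_zero h1
      exact ⟨4*k^2 - k, by rw [hk]; ring⟩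
    · obtain ⟨k, hk⟩ : (4:ℤ) ∣ Δ - 1 := by omega
      have : Δ = 4*k+1 := by omega
      exact ⟨4*k^2 + k, by rw [this]; ring⟩
  have hc : 4 * ((Δ ^ 2 - Δ) / 4) = Δ ^ 2 - Δ := Int.mul_ediv_cancel' hdvd
  have key : (2*x + Δ*y)^2 + (-Δ) * y^2 = 140 := by linear_combination 4*heq - y^2 * hc
  have hy0 : y ≠ 0 := by
    rintro rfl
    simp at heq
    have h1 : x ≤ 6 := by nlinarith [sq_nonneg (x - 6)]
    have h2 : -6 ≤ x := by nlinarith [sq_nonneg (x + 6)]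
    interval_cases x <;> norm_num at heq
  have hy1 : 1 ≤ y^2 := by
    have h1 : y^2 ≠ 0 := pow_ne_zero 2 hy0
    have h2 : 0 ≤ y^2 := sq_nonneg y
    omega
  obtain ⟨u, hu⟩ : ∃ u : ℤ, u = 2*x + Δ*y := ⟨_, rfl⟩
  rw [← hu] at key
  have hub : u^2 ≤ 140 := by nlinarith
  have hyb : y^2 ≤ 140 := by nlinarith
  have hu1 : -12 ≤ u := by nlinarith
  have hu2 : u ≤ 12 := by nlinarith
  have hy2 : -12 ≤ y := by nlinarith
  have hy3 : y ≤ 12 := by nlinarith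
  simp only [Set.mem_insert_iff, Set.mem_singleton_iff]
  clear hu hub hyb hy0 hy1 hg heq hc hdvd
  interval_cases u <;> interval_cases y <;> omega
end
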